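/- arXiv:2301.09020 — 2 statements merged into one kernel-verified Lean document; each statement's English description precedes it below -/
import Mathlib

section
/- (Mass identity.) The following identity holds: (1/n) ∑_{i=1}^n D_i / K̂(X_i−) + ΔC(τ)/(n · K̂(τ−)) = 1. -/
open Finset
open scoped Classical

noncomputable section

namespace SurvStmt

/-- The finite set of distinct observed times `{X_1, …, X_n}`. -/
def times {n : ℕ} (X : Fin n → ℝ) : Finset ℝ := Finset.image X Finset.univ

/-- `Y(t) = #{i : X_i ≥ t}`, as a real number. -/
def Yat {n : ℕ} (X : Fin n → ℝ) (t : ℝ) : ℝ :=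
  ((Finset.univ.filter (fun i => t ≤ X i)).card : ℝ)

/-- `Y(t+) = #{i : X_i > t}`, as a real number. -/
def Yplus {n : ℕ} (X : Fin n → ℝ) (t : ℝ) : ℝ :=
  ((Finset.univ.filter (fun i => t < X i)).card : ℝ)

/-- `ΔN(t) = #{i : X_i = t, D_i = 1}`, as a real number. -/
def dN {n : ℕ} (X : Fin n → ℝ) (D : Fin n → Bool) (t : ℝ) : ℝ :=
  ((Finset.univ.filter (fun i => X i = t ∧ D i = true)).card : ℝ)

/-- `ΔC(t) = #{i : X_i = t, D_i = 0}`, as a real number. -/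
def dC {n : ℕ} (X : Fin n → ℝ) (D : Fin n → Bool) (t : ℝ) : ℝ :=
  ((Finset.univ.filter (fun i => X i = t ∧ D i = false)).card : ℝ)

/-- `Y†(t) = Y(t) − ΔN(t)`. -/
def Ydag {n : ℕ} (X : Fin n → ℝ) (D : Fin n → Bool) (t : ℝ) : ℝ :=
  Yat X t - dN X D t

/-- `τ = max_i X_i`, the largest observation time (0 if there is no data). -/
def tau {n : ℕ} (X : Fin n → ℝ) : ℝ := WithBot.unbotD 0 ((times X).max)

/-- Censoring product-limit estimator `K̂(t) = ∏_{u ≤ t} (1 − ΔC(u)/Y†(u))`. -/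
def Khat {n : ℕ} (X : Fin n → ℝ) (D : Fin n → Bool) (t : ℝ) : ℝ :=
  ∏ u ∈ (times X).filter (fun u => u ≤ t), (1 - dC X D u / Ydag X D u)

/-- Left limit `K̂(t−) = ∏_{u < t} (1 − ΔC(u)/Y†(u))`. -/
def Kminus {n : ℕ} (X : Fin n → ℝ) (D : Fin n → Bool) (t : ℝ) : ℝ :=
  ∏ u ∈ (times X).filter (fun u => u < t), (1 - dC X D u / Ydag X D u)

/-- Failure product-limit estimator `Ŝ_PL(t) = ∏_{u ≤ t} (1 − ΔN(u)/Y(u))`. -/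
def SPL {n : ℕ} (X : Fin n → ℝ) (D : Fin n → Bool) (t : ℝ) : ℝ :=
  ∏ u ∈ (times X).filter (fun u => u ≤ t), (1 - dN X D u / Yat X u)

/-- Left limit `Ŝ_PL(t−) = ∏_{u < t} (1 − ΔN(u)/Y(u))`. -/
def SPLminus {n : ℕ} (X : Fin n → ℝ) (D : Fin n → Bool) (t : ℝ) : ℝ :=
  ∏ u ∈ (times X).filter (fun u => u < t), (1 - dN X D u / Yat X u)

/-- IPCW estimator `F̂_IPCW(t) = (1/n) ∑_i D_i 1{X_i ≤ t} / K̂(X_i−)`. -/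
def FIPCW {n : ℕ} (X : Fin n → ℝ) (D : Fin n → Bool) (t : ℝ) : ℝ :=
  (1 / (n : ℝ)) * ∑ i : Fin n,
    (if D i = true then (1 : ℝ) else 0) * (if X i ≤ t then (1 : ℝ) else 0) / Kminus X D (X i)

/-- IPCW survival estimator `S̃_IPCW(t) = (1/n) ∑_i D_i 1{X_i > t} / K̂(X_i−)`. -/
def SIPCW {n : ℕ} (X : Fin n → ℝ) (D : Fin n → Bool) (t : ℝ) : ℝ :=
  (1 / (n : ℝ)) * ∑ i : Fin n,
    (if D i = true then (1 : ℝ) else 0) * (if t < X i then (1 : ℝ) else 0) / Kminus X D (X i)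

/-- RTTR jump weight `J(v) = 1/(n · K̂(v−))`. -/
def Jw {n : ℕ} (X : Fin n → ℝ) (D : Fin n → Bool) (v : ℝ) : ℝ :=
  1 / ((n : ℝ) * Kminus X D v)

/-- Redistribute-to-the-right estimator
`Ŝ_RTTR(t) = 1 − ∑_{v ≤ t} [J(v) ΔN(v) 1{v < τ} + J(τ) Y(τ) 1{v = τ}]`. -/
def SRTTR {n : ℕ} (X : Fin n → ℝ) (D : Fin n → Bool) (t : ℝ) : ℝ :=
  1 - ∑ v ∈ (times X).filter (fun v => v ≤ t),
      (Jw X D v * dN X D v * (if v < tau X then (1 : ℝ) else 0)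
        + Jw X D (tau X) * Yat X (tau X) * (if v = tau X then (1 : ℝ) else 0))
/-!
Reweighting by `1 / K̂(u−)` conserves mass along the ordered observation times.
If `s < t` are consecutive times then `K̂(t−) = K̂(s) = K̂(s−) · Y(s+) / Y†(s)` and `Y(t) = Y(s+)`,
so `Y(t) / K̂(t−) = Y†(s) / K̂(s−) = (Y(s) − ΔN(s)) / K̂(s−)`. Hence
`∑_{u < t} ΔN(u) / K̂(u−) + Y(t) / K̂(t−)` has the same value `n` at every observation time `t`.
At `t = τ` no one survives past `τ`, so `Y(τ) = ΔN(τ) + ΔC(τ)`, which gives the identity.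
-/

theorem filter_le_eq_insert_filter_lt {α : Type*} [LinearOrder α] {T : Finset α} {s : α}
    (hs : s ∈ T) : T.filter (· ≤ s) = insert s (T.filter (· < s)) := by
  ext u
  simp only [mem_filter, mem_insert]
  constructor
  · rintro ⟨hu, hus⟩
    rcases hus.eq_or_lt with rfl | hlt
    exacts [Or.inl rfl, Or.inr ⟨hu, hlt⟩]
  · rintro (rfl | ⟨hu, hlt⟩)
    exacts [⟨hs, le_rfl⟩, ⟨hu, hlt.le⟩]

section Counts

variable {n : ℕ} (X : Fin n → ℝ) (D : Fin n → Bool)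

lemma Yat_eq_Yplus_add_dN_add_dC (t : ℝ) : Yat X t = Yplus X t + dN X D t + dC X D t := by
  simp only [Yat, Yplus, dN, dC, card_filter]
  push_cast
  rw [← sum_add_distrib, ← sum_add_distrib]
  refine sum_congr rfl fun i _ => ?_
  rcases lt_trichotomy t (X i) with h | h | h
  · simp [h, h.le, h.ne']
  · cases D i <;> simp [h]
  · simp [h.ne, not_le.mpr h, not_lt.mpr h.le]

lemma Ydag_eq_Yplus_add_dC (t : ℝ) : Ydag X D t = Yplus X t + dC X D t := by
  rw [Ydag, Yat_eq_Yplus_add_dN_add_dC X D]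
  ring

lemma Yplus_pos_of_lt {s : ℝ} {i : Fin n} (h : s < X i) : 0 < Yplus X s := by
  unfold Yplus
  exact_mod_cast card_pos.mpr ⟨i, by simpa using h⟩

lemma sum_boole_div_eq_sum_dN_div (f : ℝ → ℝ) :
    ∑ i, (if D i = true then (1 : ℝ) else 0) / f (X i) = ∑ u ∈ times X, dN X D u / f u := by
  rw [← sum_fiberwise_of_maps_to (fun i _ => mem_image_of_mem X (mem_univ i))]
  refine sum_congr rfl fun u _ => ?_
  rw [sum_congr rfl fun i hi => by rw [(mem_filter.mp hi).2], ← sum_div, sum_boole,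
    filter_filter, dN]

lemma Khat_eq_Kminus_mul {s : ℝ} (hs : s ∈ times X) :
    Khat X D s = Kminus X D s * (1 - dC X D s / Ydag X D s) := by
  rw [Khat, Kminus, filter_le_eq_insert_filter_lt hs, prod_insert (by simp), mul_comm]

lemma Yplus_div_Khat {s : ℝ} (hs : s ∈ times X) (hpos : 0 < Yplus X s) :
    Yplus X s / Khat X D s = Ydag X D s / Kminus X D s := by
  have hdag : 0 < Ydag X D s := by
    rw [Ydag_eq_Yplus_add_dC]
    exact add_pos_of_pos_of_nonneg hpos (Nat.cast_nonneg _)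
  have hfactor : 1 - dC X D s / Ydag X D s = Yplus X s / Ydag X D s := by
    rw [eq_div_iff hdag.ne', sub_mul, div_mul_cancel₀ _ hdag.ne', Ydag_eq_Yplus_add_dC]
    ring
  rw [Khat_eq_Kminus_mul X D hs, hfactor, mul_div_assoc', div_div_eq_mul_div,
    mul_comm (Kminus X D s), mul_div_mul_left _ _ hpos.ne']

end Counts

section Consecutive

variable {n : ℕ} (X : Fin n → ℝ) (D : Fin n → Bool) {s t : ℝ}
  (hst : s < t) (hgap : ∀ u ∈ times X, u < t → u ≤ s)
include hst hgap

lemma filter_lt_eq_filter_le_of_gap : (times X).filter (· < t) = (times X).filter (· ≤ s) :=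
  filter_congr fun u hu => ⟨hgap u hu, fun hus => hus.trans_lt hst⟩

lemma Kminus_eq_Khat_of_gap : Kminus X D t = Khat X D s := by
  rw [Kminus, Khat, filter_lt_eq_filter_le_of_gap X hst hgap]

lemma Yat_eq_Yplus_of_gap : Yat X t = Yplus X s := by
  unfold Yat Yplus
  congr 2
  refine filter_congr fun i _ => ⟨hst.trans_le, fun hsi => ?_⟩
  by_contra! hit
  exact (hgap (X i) (mem_image_of_mem X (mem_univ i)) hit).not_gt hsi

end Consecutive

section Mass

variable {n : ℕ} (X : Fin n → ℝ) (D : Fin n → Bool)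

def reweightedMass (t : ℝ) : ℝ :=
  ∑ u ∈ (times X).filter (· < t), dN X D u / Kminus X D u + Yat X t / Kminus X D t

lemma reweightedMass_eq_card {t : ℝ} (ht : t ∈ times X) : reweightedMass X D t = n := by
  refine Set.WellFoundedOn.induction (P := fun t => reweightedMass X D t = n)
    ((times X : Set ℝ).toFinite.wellFoundedOn (r := (· < ·))) ht fun t ht ih => ?_
  rw [reweightedMass]
  by_cases hbelow : ((times X).filter (· < t)).Nonempty
  · set s := ((times X).filter (· < t)).max' hbelow
    obtain ⟨hs, hst⟩ := mem_filter.mp (max'_mem _ hbelow)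
    have hgap : ∀ u ∈ times X, u < t → u ≤ s := fun u hu hut =>
      le_max' _ u (mem_filter.mpr ⟨hu, hut⟩)
    obtain ⟨i, -, rfl⟩ := mem_image.mp ht
    rw [filter_lt_eq_filter_le_of_gap X hst hgap, filter_le_eq_insert_filter_lt hs,
      sum_insert (by simp), Kminus_eq_Khat_of_gap X D hst hgap, Yat_eq_Yplus_of_gap X hst hgap,
      Yplus_div_Khat X D hs (Yplus_pos_of_lt X hst), ← ih s hs hst, reweightedMass, Ydag]
    ring
  · have hfilter : (times X).filter (· < t) = ∅ := not_nonempty_iff_eq_empty.mp hbelow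
    have hall : ∀ i, t ≤ X i := fun i => by
      by_contra! hlt
      exact hbelow ⟨X i, mem_filter.mpr ⟨mem_image_of_mem X (mem_univ i), hlt⟩⟩
    simp [Kminus, Yat, hfilter, hall]

lemma isGreatest_tau (hn : 0 < n) : IsGreatest (times X) (tau X) := by
  have hne : (times X).Nonempty := ⟨X ⟨0, hn⟩, mem_image_of_mem X (mem_univ _)⟩
  rw [tau, ← coe_max' hne, WithBot.unbotD_coe]
  exact isGreatest_max' _ hne

lemma sum_dN_div_Kminus_add_dC_tau (hn : 0 < n) :
    ∑ u ∈ times X, dN X D u / Kminus X D u + dC X D (tau X) / Kminus X D (tau X) = n := by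
  obtain ⟨hτ, hle⟩ := isGreatest_tau X hn
  have hYplus : Yplus X (tau X) = 0 := by
    simp [Yplus, fun i => not_lt.mpr (hle (mem_image_of_mem X (mem_univ i)))]
  have hYat : Yat X (tau X) = dN X D (tau X) + dC X D (tau X) := by
    rw [Yat_eq_Yplus_add_dN_add_dC X D, hYplus, zero_add]
  have htimes : times X = insert (tau X) ((times X).filter (· < tau X)) := by
    rw [← filter_le_eq_insert_filter_lt hτ, filter_true_of_mem hle]
  rw [htimes, sum_insert (by simp), ← reweightedMass_eq_card X D hτ, reweightedMass, hYat]
  ring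
end Mass

theorem stmt11_general (n : ℕ) (hn : 0 < n) (X : Fin n → ℝ) (D : Fin n → Bool) :
    (1 / (n : ℝ)) * ∑ i : Fin n,
        (if D i = true then (1 : ℝ) else 0) / Kminus X D (X i)
      + dC X D (tau X) / ((n : ℝ) * Kminus X D (tau X)) = 1 := by
  rw [sum_boole_div_eq_sum_dN_div X D, mul_comm (n : ℝ), ← div_div, one_div_mul_eq_div,
    ← add_div, sum_dN_div_Kminus_add_dC_tau X D hn, div_self (by positivity)]

/-- mass identity:
`(1/n) ∑_i D_i / K̂(X_i−) + ΔC(τ)/(n K̂(τ−)) = 1`. -/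
theorem stmt11 (n : ℕ) (hn : 0 < n) (X : Fin n → ℝ) (D : Fin n → Bool)
    (hX : ∀ i, 0 < X i) :
    (1 / (n : ℝ)) * ∑ i : Fin n,
        (if D i = true then (1 : ℝ) else 0) / Kminus X D (X i)
      + dC X D (tau X) / ((n : ℝ) * Kminus X D (tau X)) = 1 :=
  stmt11_general n hn X D

end SurvStmt
end
end

section
/- (RTTR equals the self-consistent/product-limit estimator, allowing ties.) For every real t ≥ 0, the redistribute-to-the-right estimator satisfies: Ŝ_RTTR(t) = Ŝ_PL(t) if 0 ≤ t < τ, and Ŝ_RTTR(t) = 0 if t ≥ τ. -/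
/-! Split the risk set at an observed time `u` as `Y(u) = ΔN(u) + ΔC(u) + Y(u+)`. Each
factor of `K̂(t−) Ŝ_PL(t−)` is then `Y(u+)/Y(u)`, and these telescope to `Y(t)/n`. Hence
`J(v) = Ŝ_PL(v−)/Y(v)`, so the RTTR jump `J(v) ΔN(v)` is the product-limit jump
`Ŝ_PL(v−) ΔN(v)/Y(v) = Ŝ_PL(v−) − Ŝ_PL(v)`, and summing jumps gives `Ŝ_RTTR = Ŝ_PL` before `τ`.
At `τ` the remaining mass `J(τ) Y(τ) = Ŝ_PL(τ−)` brings `Ŝ_RTTR` down to `0`. -/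

open Finset
open scoped Classical

noncomputable section

namespace SurvStmt

variable {n : ℕ}

theorem prod_filter_one_sub_of_antitone {α R : Type*} [LinearOrder α] [CommRing R]
    (T : Finset α) (f : α → R) {p : α → Prop} [DecidablePred p] (hp : Antitone p) :
    ∏ u ∈ T.filter p, (1 - f u)
      = 1 - ∑ v ∈ T.filter p, f v * ∏ u ∈ T.filter (· < v), (1 - f u) := by
  rw [prod_one_sub_ordered]
  congr 1
  refine sum_congr rfl fun v hv => ?_
  rw [filter_filter, filter_congr fun u (_ : u ∈ T) =>
    and_iff_right_of_imp fun (huv : u < v) => hp huv.le (mem_filter.1 hv).2]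

theorem Yat_pos {X : Fin n → ℝ} {v : ℝ} (hv : v ∈ times X) : 0 < Yat X v := by
  obtain ⟨i, -, rfl⟩ := mem_image.1 hv
  exact Nat.cast_pos.2 (card_pos.2 ⟨i, by simp⟩)

theorem Yat_eq_dN_add_dC_add_Yplus (X : Fin n → ℝ) (D : Fin n → Bool) (u : ℝ) :
    Yat X u = dN X D u + dC X D u + Yplus X u := by
  simp only [Yat, dN, dC, Yplus, card_filter]
  push_cast
  rw [← sum_add_distrib, ← sum_add_distrib]
  refine sum_congr rfl fun i _ => ?_
  rcases lt_trichotomy (X i) u with h | rfl | h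
  · simp [h.ne, h.not_ge, h.le]
  · cases D i <;> simp
  · simp [h, h.le, h.ne']

theorem Ydag_eq_dC_add_Yplus (X : Fin n → ℝ) (D : Fin n → Bool) (u : ℝ) :
    Ydag X D u = dC X D u + Yplus X u := by
  rw [Ydag, Yat_eq_dN_add_dC_add_Yplus X D u]
  ring

theorem one_sub_dN_div_mul_one_sub_dC_div (X : Fin n → ℝ) (D : Fin n → Bool) {u : ℝ}
    (hu : 0 < Yat X u) :
    (1 - dN X D u / Yat X u) * (1 - dC X D u / Ydag X D u) = Yplus X u / Yat X u := by
  have hYdag := Ydag_eq_dC_add_Yplus X D u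
  have hdC : 0 ≤ dC X D u := by unfold dC; positivity
  have hYplus : 0 ≤ Yplus X u := by unfold Yplus; positivity
  have h1 : 1 - dN X D u / Yat X u = Ydag X D u / Yat X u := by
    rw [Ydag]; field_simp
  rw [h1]
  rcases eq_or_ne (Ydag X D u) 0 with h0 | h0
  · -- `dC / Ydag` is junk here, but it is multiplied by `Ydag = 0`.
    have : Yplus X u = 0 := by linarith
    simp [h0, this]
  · field_simp
    linarith

/-- The at-risk counts telescope, `Y(u+)` being `Y` at the next observed time. -/
theorem prod_Yplus_div_Yat (hn : 0 < n) (X : Fin n → ℝ) (t : ℝ) :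
    ∏ u ∈ (times X).filter (· < t), Yplus X u / Yat X u = Yat X t / n := by
  suffices ∀ S : Finset ℝ, ∀ t, (times X).filter (· < t) = S →
      ∏ u ∈ S, Yplus X u / Yat X u = Yat X t / n from this _ t rfl
  intro S
  induction S using Finset.induction_on_max with
  | empty =>
    intro t ht
    have hall : univ.filter (fun i => t ≤ X i) = univ := filter_true_of_mem fun i _ => by
      by_contra! h
      exact eq_empty_iff_forall_notMem.1 ht (X i)
        (mem_filter.2 ⟨mem_image_of_mem X (mem_univ i), h⟩)
    have hn' : (n : ℝ) ≠ 0 := by positivity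
    rw [prod_empty, Yat, hall, card_univ, Fintype.card_fin, div_self hn']
  | insert a s has ih =>
    intro t ht
    have hmem : ∀ u, u = a ∨ u ∈ s ↔ u ∈ times X ∧ u < t := fun u => by
      rw [← mem_insert, ← ht, mem_filter]
    have ha := (hmem a).1 (Or.inl rfl)
    have hs : (times X).filter (· < a) = s := by
      ext u
      rw [mem_filter]
      refine ⟨fun ⟨huT, hua⟩ => ?_, fun hu => ⟨((hmem u).1 (Or.inr hu)).1, has u hu⟩⟩
      exact ((hmem u).2 ⟨huT, hua.trans ha.2⟩).resolve_left hua.ne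
    have hYplus : Yplus X a = Yat X t := by
      unfold Yplus Yat
      congr 2
      refine filter_congr fun i _ => ⟨fun hai => ?_, fun hti => ha.2.trans_le hti⟩
      by_contra! hit
      rcases (hmem (X i)).2 ⟨mem_image_of_mem X (mem_univ i), hit⟩ with h | h
      · exact hai.ne' h
      · exact (has _ h).not_gt hai
    rw [prod_insert fun h => lt_irrefl a (has a h), ih a hs, ← hYplus]
    field_simp [(Yat_pos ha.1).ne']

theorem Kminus_mul_SPLminus (hn : 0 < n) (X : Fin n → ℝ) (D : Fin n → Bool) (t : ℝ) :
    Kminus X D t * SPLminus X D t = Yat X t / n := by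
  rw [Kminus, SPLminus, ← prod_mul_distrib, ← prod_Yplus_div_Yat hn X t]
  refine prod_congr rfl fun u hu => ?_
  rw [mul_comm]
  exact one_sub_dN_div_mul_one_sub_dC_div X D (Yat_pos (mem_filter.1 hu).1)

theorem Jw_eq_SPLminus_div_Yat (hn : 0 < n) {X : Fin n → ℝ} (D : Fin n → Bool) {v : ℝ}
    (hv : v ∈ times X) : Jw X D v = SPLminus X D v / Yat X v := by
  have hn' : (n : ℝ) ≠ 0 := by positivity
  have hKS : n * Kminus X D v * SPLminus X D v = Yat X v := by
    rw [mul_assoc, Kminus_mul_SPLminus hn X D v]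
    field_simp
  have hprod : (n : ℝ) * Kminus X D v * SPLminus X D v ≠ 0 := hKS ▸ (Yat_pos hv).ne'
  have hK : Kminus X D v ≠ 0 := right_ne_zero_of_mul (left_ne_zero_of_mul hprod)
  have hS : SPLminus X D v ≠ 0 := right_ne_zero_of_mul hprod
  rw [Jw, ← hKS]
  field_simp

theorem one_sub_sum_Jw_mul_dN (hn : 0 < n) (X : Fin n → ℝ) (D : Fin n → Bool)
    {p : ℝ → Prop} [DecidablePred p] (hp : Antitone p) :
    1 - ∑ v ∈ (times X).filter p, Jw X D v * dN X D v
      = ∏ u ∈ (times X).filter p, (1 - dN X D u / Yat X u) := by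
  rw [prod_filter_one_sub_of_antitone _ _ hp]
  congr 1
  refine sum_congr rfl fun v hv => ?_
  rw [Jw_eq_SPLminus_div_Yat hn D (mem_filter.1 hv).1, SPLminus]
  ring

theorem times_nonempty (hn : 0 < n) (X : Fin n → ℝ) : (times X).Nonempty :=
  ⟨X ⟨0, hn⟩, mem_image_of_mem X (mem_univ _)⟩

theorem tau_eq_max' (hn : 0 < n) (X : Fin n → ℝ) :
    tau X = (times X).max' (times_nonempty hn X) := by
  rw [tau, ← coe_max' (times_nonempty hn X)]
  rfl

theorem tau_mem_times (hn : 0 < n) (X : Fin n → ℝ) : tau X ∈ times X := by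
  rw [tau_eq_max' hn]
  exact max'_mem _ _

theorem le_tau (hn : 0 < n) {X : Fin n → ℝ} {u : ℝ} (hu : u ∈ times X) : u ≤ tau X := by
  rw [tau_eq_max' hn]
  exact le_max' _ u hu

theorem stmt17_general (n : ℕ) (hn : 0 < n) (X : Fin n → ℝ) (D : Fin n → Bool) :
    ∀ t : ℝ, 0 ≤ t →
      (t < tau X → SRTTR X D t = SPL X D t)
      ∧ (tau X ≤ t → SRTTR X D t = 0) := by
  intro t _
  have hτ := tau_mem_times hn X
  constructor
  · intro ht
    rw [SRTTR, SPL, ← one_sub_sum_Jw_mul_dN hn X D fun _ _ hab h => hab.trans h]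
    congr 1
    refine sum_congr rfl fun v hv => ?_
    have hvτ : v < tau X := (mem_filter.1 hv).2.trans_lt ht
    simp [hvτ, hvτ.ne]
  · intro ht
    have hall : (times X).filter (· ≤ t) = times X :=
      filter_true_of_mem fun v hv => (le_tau hn hv).trans ht
    have hbefore := one_sub_sum_Jw_mul_dN hn X D (p := (· < tau X)) fun _ _ hab h => hab.trans_lt h
    rw [SRTTR, hall, sum_add_distrib]
    simp only [mul_ite, mul_one, mul_zero, ← sum_filter]
    rw [filter_eq', if_pos hτ, sum_singleton, Jw_eq_SPLminus_div_Yat hn D hτ,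
      div_mul_cancel₀ _ (Yat_pos hτ).ne', SPLminus, ← hbefore]
    ring

/-- RTTR equals the self-consistent/product-limit estimator, allowing
ties: `Ŝ_RTTR(t) = Ŝ_PL(t)` for `0 ≤ t < τ`, and `Ŝ_RTTR(t) = 0` for `t ≥ τ`. -/
theorem stmt17 (n : ℕ) (hn : 0 < n) (X : Fin n → ℝ) (D : Fin n → Bool)
    (hX : ∀ i, 0 < X i) :
    ∀ t : ℝ, 0 ≤ t →
      (t < tau X → SRTTR X D t = SPL X D t)
      ∧ (tau X ≤ t → SRTTR X D t = 0) :=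
  stmt17_general n hn X D

end SurvStmt
end
end
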